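/- arXiv:1403.7649 — 8 statements merged into one kernel-verified Lean document; each statement's English description precedes it below -/
import Mathlib

section
/- For every x ∈ V, the minimal period of the point (0, x) under iteration of τ equals m times the minimal period of x under iteration of P; that is, Function.minimalPeriod τ (0, x) = m * Function.minimalPeriod P x. (This is Theorem 2.6: every cycle σ_j in the disjoint cyclic decomposition of P_h corresponds to a strongly connected component of C_m^+ ⊗_h Γ of length m·|σ_j|.) -/
/-- Theorem 2.6. Let `m ≥ 1`, `V` a finite nonempty type,
`σ : ZMod m → Equiv.Perm V`, `τ` the permutation of `ZMod m × V` with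
`τ (i, x) = (i + 1, σ i x)`, and `P = σ (m-1) ∘ ⋯ ∘ σ 1 ∘ σ 0` (with `σ 0` applied first).
Then for every `x ∈ V`, the minimal period of `(0, x)` under iteration of `τ` is `m` times
the minimal period of `x` under iteration of `P`. -/
theorem minimalPeriod_tau_eq_mul {m : ℕ} (hm : 1 ≤ m) {V : Type*} [Fintype V] [Nonempty V]
    (σ : ZMod m → Equiv.Perm V) (τ : Equiv.Perm (ZMod m × V))
    (hτ : ∀ (i : ZMod m) (x : V), τ (i, x) = (i + 1, σ i x))
    (P : Equiv.Perm V)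
    (hP : ∀ x : V, P x = (List.range m).foldl (fun y i => σ (i : ZMod m) y) x) :
    ∀ x : V, Function.minimalPeriod ⇑τ ((0 : ZMod m), x) = m * Function.minimalPeriod ⇑P x := by
  haveI : NeZero m := ⟨by omega⟩
  -- general iterate formula
  have key : ∀ (j : ℕ) (y : V), (⇑τ)^[j] ((0 : ZMod m), y) =
      ((j : ZMod m), (List.range j).foldl (fun z t => σ (t : ZMod m) z) y) := by
    intro j
    induction j with
    | zero => intro y; simp
    | succ n ih =>
      intro y
      rw [Function.iterate_succ_apply', ih]
      rw [hτ]
      simp [List.range_succ, List.foldl_append, add_comm]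
  have hm0 : ∀ y : V, (⇑τ)^[m] ((0 : ZMod m), y) = ((0 : ZMod m), P y) := by
    intro y
    rw [key, hP]
    simp
  have hmn : ∀ (n : ℕ) (y : V), (⇑τ)^[m * n] ((0 : ZMod m), y) = ((0 : ZMod m), (⇑P)^[n] y) := by
    intro n
    induction n with
    | zero => intro y; simp
    | succ n ih =>
      intro y
      have : m * (n + 1) = m + m * n := by ring
      rw [this, Function.iterate_add_apply, ih, hm0, Function.iterate_succ_apply']
  intro x
  set a := Function.minimalPeriod ⇑P x with ha
  set k := Function.minimalPeriod ⇑τ ((0 : ZMod m), x) with hk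
  have hkper : Function.IsPeriodicPt ⇑τ k ((0 : ZMod m), x) :=
    Function.isPeriodicPt_minimalPeriod _ _
  have hkpos : 0 < k := by
    rw [hk]
    apply Function.IsPeriodicPt.minimalPeriod_pos (n := orderOf τ) (orderOf_pos τ)
    have h : τ ^ (orderOf τ) = 1 := pow_orderOf_eq_one τ
    show (⇑τ)^[orderOf τ] (0, x) = (0, x)
    rw [← Equiv.Perm.coe_pow, h]
    simp
  -- m ∣ k
  have hdk : m ∣ k := by
    have := hkper
    unfold Function.IsPeriodicPt Function.IsFixedPt at this
    rw [key] at this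
    have h1 : ((k : ZMod m)) = 0 := by
      have := congrArg Prod.fst this
      simpa using this
    exact (ZMod.natCast_eq_zero_iff k m).mp h1
  obtain ⟨n, hn⟩ := hdk
  -- P^[n] x = x
  have hPn : Function.IsPeriodicPt ⇑P n x := by
    have := hkper
    unfold Function.IsPeriodicPt Function.IsFixedPt at this ⊢
    rw [hn, hmn] at this
    have := congrArg Prod.snd this
    simpa using this
  have hadn : a ∣ n := Function.IsPeriodicPt.minimalPeriod_dvd hPn
  have hma : Function.IsPeriodicPt ⇑τ (m * a) ((0 : ZMod m), x) := by
    unfold Function.IsPeriodicPt Function.IsFixedPt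
    rw [hmn]
    rw [Function.isPeriodicPt_minimalPeriod ⇑P x]
  have h1 : k ∣ m * a := Function.IsPeriodicPt.minimalPeriod_dvd hma
  have h2 : m * a ∣ k := by rw [hn]; exact Nat.mul_dvd_mul_left m hadn
  exact Nat.dvd_antisymm h1 h2
end

section
/- The number of orbits of the cyclic group generated by τ acting on ZMod m × V equals the number of orbits of the cyclic group generated by P acting on V. (Equivalently: the number of connected components of the product digraph C_m^+ ⊗_h Γ equals the number of cycles, including fixed points, in the disjoint cyclic decomposition of P_h.) -/
/-!
Every `τ`-orbit meets the fibre `{0} × V`, since `τ` shifts the first coordinate by `1`, and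
`τ ^ m` maps this fibre to itself by `P`. Two points `(0, x)` and `(0, y)` are in the same
`τ`-orbit only through a power `τ ^ n` with `n ≡ 0 [ZMOD m]`, i.e. through a power of `τ ^ m`,
hence of `P`. So `x ↦ (0, x)` induces a bijection from the `P`-orbits onto the `τ`-orbits.
-/

open Equiv Equiv.Perm Function MulAction

theorem Function.Semiconj.perm_zpow {α β : Type*} {f : α → β} {g : Perm α} {g' : Perm β}
    (h : Semiconj f g g') : ∀ n : ℤ, Semiconj f ⇑(g ^ n) ⇑(g' ^ n)
  | Int.ofNat n => by simpa [coe_pow] using h.iterate_right n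
  | Int.negSucc n => by
    simp only [zpow_negSucc]
    exact (h.iterate_right (n + 1)).inverses_right
      (by simpa [coe_pow] using (g ^ (n + 1)).right_inv)
      (by simpa [coe_pow] using (g' ^ (n + 1)).left_inv)

theorem MulAction.orbitRel_zpowers_iff_sameCycle {α : Type*} (f : Perm α) (x y : α) :
    orbitRel (Subgroup.zpowers f) α x y ↔ f.SameCycle x y := by
  simp only [orbitRel_apply, mem_orbit_iff, Subgroup.exists_zpowers]
  exact sameCycle_comm

theorem Nat.card_quotient_eq_of_rel_iff {α β : Type*} {r : Setoid α} {s : Setoid β}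
    (f : α → β) (hf : ∀ x y, s (f x) (f y) ↔ r x y) (hsurj : ∀ b, ∃ a, s b (f a)) :
    Nat.card (Quotient r) = Nat.card (Quotient s) := by
  refine Nat.card_eq_of_bijective (Quotient.map f fun x y => (hf x y).2) ⟨?_, ?_⟩
  · rintro ⟨x⟩ ⟨y⟩ hxy
    exact Quotient.sound ((hf x y).1 (Quotient.exact hxy))
  · rintro ⟨b⟩
    obtain ⟨a, hab⟩ := hsurj b
    exact ⟨⟦a⟧, (Quotient.sound hab).symm⟩

section CyclicCover

variable {V : Type*}

theorem fst_zpow_apply_of_fst_apply {A : Type*} [AddGroupWithOne A] {τ : Perm (A × V)}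
    (hτ : ∀ z, (τ z).1 = z.1 + 1) (n : ℤ) (z : A × V) : ((τ ^ n) z).1 = z.1 + n := by
  have : Semiconj Prod.fst τ (Equiv.addRight (1 : A)) := hτ
  rw [this.perm_zpow n z, zsmul_addRight, coe_addRight, zsmul_one]

variable {m : ℕ} {τ : Perm (ZMod m × V)} {P : Perm V}

theorem sameCycle_mk_zero_iff (hτ : ∀ z, (τ z).1 = z.1 + 1)
    (hP : Semiconj (Prod.mk 0) P ⇑(τ ^ m)) (x y : V) :
    τ.SameCycle (0, x) (0, y) ↔ P.SameCycle x y := by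
  have hmul (n : ℤ) : (τ ^ ((m : ℤ) * n)) (0, x) = (0, (P ^ n) x) := by
    rw [zpow_mul, zpow_natCast, hP.perm_zpow n x]
  constructor
  · rintro ⟨n, hn⟩
    have hn0 : (n : ZMod m) = 0 := by
      simpa using (fst_zpow_apply_of_fst_apply hτ n _).symm.trans (congrArg Prod.fst hn)
    obtain ⟨k, rfl⟩ := (ZMod.intCast_zmod_eq_zero_iff_dvd n m).1 hn0
    exact ⟨k, congrArg Prod.snd ((hmul k).symm.trans hn)⟩
  · rintro ⟨n, rfl⟩
    exact ⟨m * n, hmul n⟩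

theorem exists_sameCycle_mk_zero (hτ : ∀ z, (τ z).1 = z.1 + 1) (z : ZMod m × V) :
    ∃ x, τ.SameCycle z (0, x) :=
  ⟨((τ ^ (-z.1.cast : ℤ)) z).2, -z.1.cast, Prod.ext (by
    rw [fst_zpow_apply_of_fst_apply hτ, Int.cast_neg, ZMod.intCast_zmod_cast, add_neg_cancel])
    rfl⟩

theorem pow_apply_mk_zero {σ : ZMod m → Perm V}
    (hτ : ∀ i x, τ (i, x) = (i + 1, σ i x)) (k : ℕ) (x : V) :
    (τ ^ k) (0, x) = ((k : ZMod m), (List.range k).foldl (fun y i => σ (i : ZMod m) y) x) := by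
  induction k with
  | zero => simp
  | succ k ih => simp [pow_succ', mul_apply, ih, hτ, List.range_succ]

end CyclicCover

theorem card_orbits_tau_eq_card_orbits_P_general {m : ℕ} {V : Type*}
    (σ : ZMod m → Equiv.Perm V) (τ : Equiv.Perm (ZMod m × V))
    (hτ : ∀ (i : ZMod m) (x : V), τ (i, x) = (i + 1, σ i x))
    (P : Equiv.Perm V)
    (hP : ∀ x : V, P x = (List.range m).foldl (fun y i => σ (i : ZMod m) y) x) :
    Nat.card (MulAction.orbitRel.Quotient (Subgroup.zpowers τ) (ZMod m × V)) =
      Nat.card (MulAction.orbitRel.Quotient (Subgroup.zpowers P) V) := by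
  have hfst (z : ZMod m × V) : (τ z).1 = z.1 + 1 := by rw [hτ z.1 z.2]
  have hPτ : Semiconj (Prod.mk 0) P ⇑(τ ^ m) := fun x => by
    rw [pow_apply_mk_zero hτ, ZMod.natCast_self, hP]
  refine (Nat.card_quotient_eq_of_rel_iff (Prod.mk 0) (fun x y => ?_) fun z => ?_).symm
  · rw [orbitRel_zpowers_iff_sameCycle, orbitRel_zpowers_iff_sameCycle,
      sameCycle_mk_zero_iff hfst hPτ]
  · obtain ⟨x, hx⟩ := exists_sameCycle_mk_zero hfst z
    exact ⟨x, (orbitRel_zpowers_iff_sameCycle _ _ _).2 hx⟩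

/-- With `τ` and `P` as before, the number of orbits of the cyclic group
generated by `τ` acting on `ZMod m × V` equals the number of orbits of the cyclic group
generated by `P` acting on `V`; i.e. the number of connected components of the product
digraph `C_m^+ ⊗_h Γ` equals the number of cycles in the disjoint cyclic decomposition
of `P_h`. -/
theorem card_orbits_tau_eq_card_orbits_P {m : ℕ} (hm : 1 ≤ m) {V : Type*} [Fintype V]
    [Nonempty V]
    (σ : ZMod m → Equiv.Perm V) (τ : Equiv.Perm (ZMod m × V))
    (hτ : ∀ (i : ZMod m) (x : V), τ (i, x) = (i + 1, σ i x))
    (P : Equiv.Perm V)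
    (hP : ∀ x : V, P x = (List.range m).foldl (fun y i => σ (i : ZMod m) y) x) :
    Nat.card (MulAction.orbitRel.Quotient (Subgroup.zpowers τ) (ZMod m × V)) =
      Nat.card (MulAction.orbitRel.Quotient (Subgroup.zpowers P) V) :=
  card_orbits_tau_eq_card_orbits_P_general σ τ hτ P hP
end

section
/- The functional digraph of τ (with arc relation Adj u v ↔ v = τ u on ZMod m × V) is strongly connected, i.e. for all u v : ZMod m × V one has Relation.ReflTransGen (fun u v => v = τ u) u v, if and only if the cyclic group generated by P acts transitively on V, i.e. for all x y : V there exists k : ℕ with (P ^ k) x = y. (This is Theorem 2.1 in permutation form: C_m^+ ⊗_h Γ is a single strongly oriented cycle of length m·|V| exactly when P_h consists of a single cycle.) -/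
/-- Theorem 2.1 in permutation form. With `τ` and `P` as before, the
functional digraph of `τ` is strongly connected if and only if the cyclic group generated
by `P` acts transitively on `V`. -/
theorem strongly_connected_iff_transitive {m : ℕ} (hm : 1 ≤ m) {V : Type*} [Fintype V]
    [Nonempty V]
    (σ : ZMod m → Equiv.Perm V) (τ : Equiv.Perm (ZMod m × V))
    (hτ : ∀ (i : ZMod m) (x : V), τ (i, x) = (i + 1, σ i x))
    (P : Equiv.Perm V)
    (hP : ∀ x : V, P x = (List.range m).foldl (fun y i => σ (i : ZMod m) y) x) :
    (∀ u v : ZMod m × V, Relation.ReflTransGen (fun u v => v = τ u) u v) ↔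
      ∀ x y : V, ∃ k : ℕ, (P ^ k) x = y := by
  haveI : NeZero m := ⟨by omega⟩
  -- iterates of τ
  have step : ∀ (n : ℕ) (i : ZMod m) (x : V),
      (τ ^ n) (i, x) = (i + (n : ℕ),
        (List.range n).foldl (fun y k => σ (i + (k : ℕ)) y) x) := by
    intro n
    induction n with
    | zero => intro i x; simp
    | succ n ih =>
      intro i x
      rw [pow_succ', Equiv.Perm.mul_apply, ih, hτ]
      simp [List.range_succ]
      ring
  have stepm : ∀ x : V, (τ ^ m) ((0 : ZMod m), x) = (0, P x) := by
    intro x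
    rw [step m 0 x, hP]
    have hl : (do let a ← List.range m
                  pure ((a : ZMod m)) : List (ZMod m)) =
        List.map (Nat.cast : ℕ → ZMod m) (List.range m) := by
      simp [← List.map_eq_flatMap]
    rw [hl, List.foldl_map]
    simp
  have stepmk : ∀ (k : ℕ) (x : V), (τ ^ (m * k)) ((0 : ZMod m), x) = (0, (P ^ k) x) := by
    intro k
    induction k with
    | zero => intro x; simp
    | succ k ih =>
      intro x
      rw [Nat.mul_succ, pow_add, Equiv.Perm.mul_apply, stepm, ih, pow_succ,
        Equiv.Perm.mul_apply]
  have reach : ∀ (n : ℕ) (u : ZMod m × V),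
      Relation.ReflTransGen (fun u v => v = τ u) u ((τ ^ n) u) := by
    intro n u
    induction n with
    | zero => simpa using Relation.ReflTransGen.refl
    | succ n ih =>
      refine Relation.ReflTransGen.tail ih ?_
      rw [pow_succ', Equiv.Perm.mul_apply]
  have reach' : ∀ u v : ZMod m × V,
      Relation.ReflTransGen (fun u v => v = τ u) u v → ∃ n, v = (τ ^ n) u := by
    intro u v h
    induction h with
    | refl => exact ⟨0, rfl⟩
    | tail h1 h2 ih =>
      obtain ⟨n, rfl⟩ := ih
      exact ⟨n + 1, by rw [h2, pow_succ', Equiv.Perm.mul_apply]⟩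
  have surj : ∀ (n : ℕ) (i : ZMod m),
      Function.Surjective (fun x : V => (List.range n).foldl (fun y k => σ (i + (k : ℕ)) y) x) := by
    intro n i
    induction n with
    | zero => intro y; exact ⟨y, rfl⟩
    | succ n ih =>
      intro y
      obtain ⟨z, hz⟩ := (σ (i + (n : ℕ))).surjective y
      obtain ⟨x, hx⟩ := ih z
      refine ⟨x, ?_⟩
      simp only [List.range_succ, List.foldl_append, List.foldl_cons, List.foldl_nil]
      simp only at hx
      rw [hx, hz]
  constructor
  · intro h x y
    obtain ⟨n, hn⟩ := reach' _ _ (h (0, x) (0, y))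
    rw [step n 0 x] at hn
    have hdvd : (m : ℕ) ∣ n := by
      have h0 : ((n : ℕ) : ZMod m) = 0 := by
        have := congrArg Prod.fst hn
        simpa using this.symm
      exact (ZMod.natCast_eq_zero_iff n m).mp h0
    obtain ⟨k, rfl⟩ := hdvd
    have := stepmk k x
    rw [step (m * k) 0 x] at this
    rw [← hn] at this
    exact ⟨k, (congrArg Prod.snd this).symm⟩
  · intro h u v
    obtain ⟨i, x⟩ := u
    obtain ⟨j, y⟩ := v
    -- first reach fiber 0
    set a := m - i.val with ha
    have hi0 : (i : ZMod m) + ((a : ℕ) : ZMod m) = 0 := by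
      rw [ha, Nat.cast_sub (le_of_lt (ZMod.val_lt i)), ZMod.natCast_self, ZMod.natCast_val,
        ZMod.cast_id]
      ring
    set x1 : V := (List.range a).foldl (fun y k => σ (i + (k : ℕ)) y) x with hx1
    have h1 : (τ ^ a) (i, x) = ((0 : ZMod m), x1) := by
      rw [step a i x, hi0]
    obtain ⟨z, hz⟩ := surj j.val 0 y
    obtain ⟨k, hk⟩ := h x1 z
    have h2 : (τ ^ (m * k)) ((0 : ZMod m), x1) = (0, z) := by rw [stepmk k x1, hk]
    have h3 : (τ ^ j.val) ((0 : ZMod m), z) = (j, y) := by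
      rw [step j.val 0 z]
      simp only at hz
      rw [hz, zero_add, ZMod.natCast_val, ZMod.cast_id]
    have r1 := reach a (i, x)
    rw [h1] at r1
    have r2 := reach (m * k) ((0 : ZMod m), x1)
    rw [h2] at r2
    have r3 := reach j.val ((0 : ZMod m), z)
    rw [h3] at r3
    exact r1.trans (r2.trans r3)
end

section
/- For every i : ZMod m and x : ZMod n, the minimal period of (i, x) under iteration of τ equals m * addOrderOf (((m : ℤ) - 2 * r : ℤ) : ZMod n), where the cast is the natural ring homomorphism ℤ → ZMod n. (This is Theorem 1.1: if h assigns C_n^- to exactly r arcs of C_m^+, then C_m^+ ⊗_h {C_n^+, C_n^-} consists of n/k disjoint copies of the strongly oriented cycle C_{mk}^+, where k is the order of the subgroup of ℤ/nℤ generated by m - 2r.) -/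
open Function Finset

/-- Theorem 1.1. Let `m, n ≥ 1`, let `ε : ZMod m → ℤ` take only the
values `1` and `-1`, let `r` be the number of indices with `ε i = -1`, and let `τ` be the
permutation of `ZMod m × ZMod n` with `τ (i, x) = (i + 1, x + ε i)`.  Then the minimal
period of every point `(i, x)` under iteration of `τ` equals
`m * addOrderOf ((m - 2r : ℤ) : ZMod n)`. -/
theorem minimalPeriod_tau_cycle_product {m n : ℕ} [NeZero m] [NeZero n]
    (ε : ZMod m → ℤ) (hε : ∀ i, ε i = 1 ∨ ε i = -1)
    (r : ℕ) (hr : r = (Finset.univ.filter fun i : ZMod m => ε i = -1).card)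
    (τ : Equiv.Perm (ZMod m × ZMod n))
    (hτ : ∀ (i : ZMod m) (x : ZMod n), τ (i, x) = (i + 1, x + (ε i : ZMod n))) :
    ∀ (i : ZMod m) (x : ZMod n),
      Function.minimalPeriod ⇑τ (i, x) =
        m * addOrderOf ((((m : ℤ) - 2 * (r : ℤ)) : ℤ) : ZMod n) := by
  intro i x
  set c : ZMod n := ((((m : ℤ) - 2 * (r : ℤ)) : ℤ) : ZMod n) with hc
  have hmpos : 0 < m := Nat.pos_of_ne_zero (NeZero.ne m)
  -- total sum of ε over ZMod m
  have htot : (∑ k : ZMod m, ε k) = (m : ℤ) - 2 * r := by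
    rw [← Finset.sum_filter_add_sum_filter_not Finset.univ (fun k => ε k = -1)]
    have h1 : (∑ k ∈ Finset.univ.filter (fun k : ZMod m => ε k = -1), ε k) = -(r : ℤ) := by
      rw [Finset.sum_congr rfl (fun k hk => (Finset.mem_filter.mp hk).2),
        Finset.sum_const, hr]
      simp
    have h2 : (∑ k ∈ Finset.univ.filter (fun k : ZMod m => ¬ ε k = -1), ε k) =
        ((Finset.univ.filter (fun k : ZMod m => ¬ ε k = -1)).card : ℤ) := by
      rw [Finset.sum_congr rfl (fun k hk => (hε k).resolve_right (Finset.mem_filter.mp hk).2),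
        Finset.sum_const]
      simp
    have h3 : (Finset.univ.filter (fun k : ZMod m => ε k = -1)).card +
        (Finset.univ.filter (fun k : ZMod m => ¬ ε k = -1)).card = m := by
      rw [Finset.card_filter_add_card_filter_not, Finset.card_univ, ZMod.card]
    rw [h1, h2]
    have := congrArg (fun t : ℕ => (t : ℤ)) h3
    push_cast at this
    rw [← hr] at this
    linarith
  -- sums over a full cycle
  have hsum : ∀ i : ZMod m, (∑ j ∈ Finset.range m, ε (i + (j : ZMod m))) = (m : ℤ) - 2 * r := by
    intro i
    have h1 : (∑ j ∈ Finset.range m, ε (i + (j : ZMod m))) = ∑ k : ZMod m, ε (i + k) := by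
      apply Finset.sum_nbij' (fun j : ℕ => ((j : ZMod m))) (fun k : ZMod m => k.val)
      · intro a _; exact Finset.mem_univ _
      · intro a _; exact Finset.mem_range.mpr (ZMod.val_lt a)
      · intro a ha; exact ZMod.val_cast_of_lt (Finset.mem_range.mp ha)
      · intro a _; exact ZMod.natCast_zmod_val a
      · intro a _; rfl
    rw [h1, ← htot]
    exact Fintype.sum_equiv (Equiv.addLeft i) _ ε (fun k => rfl)
  -- iteration formula
  have hiter : ∀ (t : ℕ) (i : ZMod m) (x : ZMod n),
      τ^[t] (i, x) = (i + (t : ZMod m),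
        x + ((∑ j ∈ Finset.range t, ε (i + (j : ZMod m)) : ℤ) : ZMod n)) := by
    intro t
    induction t with
    | zero => intro i x; simp
    | succ t ih =>
      intro i x
      rw [Function.iterate_succ_apply', ih, hτ, Finset.sum_range_succ]
      refine Prod.ext ?_ ?_
      · push_cast; ring
      · push_cast; ring
  -- full cycle
  have hcycle : ∀ y : ZMod n, τ^[m] (i, y) = (i, y + c) := by
    intro y
    rw [hiter, hsum, ZMod.natCast_self, add_zero, ← hc]
  have hqm : ∀ q : ℕ, τ^[q * m] (i, x) = (i, x + q • c) := by
    intro q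
    induction q with
    | zero => simp
    | succ q ih =>
      have : (q + 1) * m = m + q * m := by ring
      rw [this, Function.iterate_add_apply, ih, hcycle, succ_nsmul, add_assoc]
  set k := addOrderOf c with hk
  have hkpos : 0 < k := addOrderOf_pos c
  have hper : Function.IsPeriodicPt ⇑τ (m * k) (i, x) := by
    unfold Function.IsPeriodicPt Function.IsFixedPt
    rw [mul_comm, hqm k, addOrderOf_nsmul_eq_zero c, add_zero]
  have hdvd1 : Function.minimalPeriod ⇑τ (i, x) ∣ m * k := hper.minimalPeriod_dvd
  have hppos : 0 < Function.minimalPeriod ⇑τ (i, x) :=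
    hper.minimalPeriod_pos (by positivity)
  have pper : Function.IsPeriodicPt ⇑τ (Function.minimalPeriod ⇑τ (i, x)) (i, x) :=
    Function.isPeriodicPt_minimalPeriod ⇑τ (i, x)
  set p := Function.minimalPeriod ⇑τ (i, x) with hp
  have hmdvd : m ∣ p := by
    have := pper
    unfold Function.IsPeriodicPt Function.IsFixedPt at this
    rw [hiter] at this
    have h1 : i + (p : ZMod m) = i := (Prod.ext_iff.mp this).1
    have h2 : (p : ZMod m) = 0 := by
      have := h1
      rwa [add_eq_left] at this
    exact (ZMod.natCast_eq_zero_iff p m).mp h2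
  obtain ⟨q, hq⟩ := hmdvd
  have hqc : q • c = 0 := by
    have := pper
    unfold Function.IsPeriodicPt Function.IsFixedPt at this
    rw [hq, mul_comm, hqm q] at this
    have h2 : x + q • c = x := (Prod.ext_iff.mp this).2
    rwa [add_eq_left] at h2
  have hkq : k ∣ q := (addOrderOf_dvd_iff_nsmul_eq_zero).mpr hqc
  have : p = m * k := Nat.dvd_antisymm hdvd1 (by rw [hq]; exact mul_dvd_mul_left m hkq)
  exact this
end

section
/- If in addition (((m : ℤ) - 2 * r).natAbs) is coprime to n and m * n ≥ 2, then τ is a single cycle through all of ZMod m × ZMod n; that is, τ.IsCycle and τ.support = Finset.univ. (This is the last part of Theorem 1.1: when gcd(m - 2r, n) = 1, C_m^+ ⊗_h {C_n^+, C_n^-} ≅ C_{mn}^+.) -/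
/-!
Iterating `τ` walks once around `ZMod m` in `m` steps and, on the way, adds up every value
of `ε` exactly once; hence `τ ^ m` is translation by `m - 2r` in the fibre `ZMod n`. When
`m - 2r` is a unit of `ZMod n`, these translations make one fibre a single orbit of `τ`, and
the powers `τ ^ k` with `k < m` carry that fibre to every other one.
-/

open Equiv Finset

theorem ZMod.sum_range_add {m : ℕ} [NeZero m] {M : Type*} [AddCommMonoid M]
    (f : ZMod m → M) (i : ZMod m) : ∑ j ∈ range m, f (i + j) = ∑ t, f t := by
  refine sum_nbij' (fun j => i + j) (fun t => (t - i).val) (fun _ _ => mem_univ _)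
    (fun t _ => mem_range.2 (ZMod.val_lt _)) (fun j hj => ?_) (fun t _ => ?_) (fun _ _ => rfl)
  · simp [ZMod.val_natCast_of_lt (mem_range.1 hj)]
  · simp

theorem sum_eq_card_sub_two_mul_card_filter_eq_neg_one {ι : Type*} [Fintype ι]
    (ε : ι → ℤ) (hε : ∀ i, ε i = 1 ∨ ε i = -1) :
    ∑ i, ε i = Fintype.card ι - 2 * #{i | ε i = -1} := by
  have hsplit : ∀ i, ε i = 1 - 2 * if ε i = -1 then 1 else 0 := fun i => by
    rcases hε i with h | h <;> simp [h]
  rw [sum_congr rfl fun i _ => hsplit i, sum_sub_distrib, ← mul_sum, sum_boole]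
  simp

theorem ZMod.zmultiples_eq_top_of_isUnit {n : ℕ} {u : ZMod n} (hu : IsUnit u) :
    AddSubgroup.zmultiples u = ⊤ := by
  refine eq_top_iff.2 fun x _ => ⟨((x * hu.unit⁻¹ : ZMod n).cast : ℤ), ?_⟩
  simp [zsmul_eq_mul, mul_assoc]

theorem ZMod.isUnit_intCast_of_natAbs_coprime {n : ℕ} {a : ℤ} (h : a.natAbs.Coprime n) :
    IsUnit (a : ZMod n) := by
  have := (ZMod.isUnit_iff_coprime _ n).2 h
  rcases Int.natAbs_eq a with ha | ha <;> rw [ha] <;> simpa using this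

namespace Equiv.Perm

theorem isCycle_and_support_eq_univ_of_forall_sameCycle {α : Type*} [Fintype α] [DecidableEq α]
    [Nontrivial α] {f : Perm α} (h : ∀ x y, f.SameCycle x y) :
    f.IsCycle ∧ f.support = univ := by
  have hmove : ∀ x, f x ≠ x := fun x hx =>
    let ⟨y, hy⟩ := exists_ne x
    hy ((h x y).eq_of_left hx).symm
  obtain ⟨x⟩ : Nonempty α := inferInstance
  exact ⟨⟨x, hmove x, fun y _ => h x y⟩, eq_univ_of_forall fun y => mem_support.2 (hmove y)⟩

variable {m : ℕ} {G : Type*} [AddCommGroup G]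

def IsSkewShift (σ : Perm (ZMod m × G)) (c : ZMod m → G) : Prop :=
  ∀ i x, σ (i, x) = (i + 1, x + c i)

namespace IsSkewShift

variable {σ : Perm (ZMod m × G)} {c : ZMod m → G}

theorem pow_apply (hσ : σ.IsSkewShift c) (k : ℕ) (i : ZMod m) (x : G) :
    (σ ^ k) (i, x) = (i + k, x + ∑ j ∈ range k, c (i + j)) := by
  induction k with
  | zero => simp
  | succ k ih =>
    rw [pow_succ', mul_apply, ih, hσ, sum_range_succ]
    ext <;> push_cast <;> abel

theorem pow_period_apply [NeZero m] (hσ : σ.IsSkewShift c) (i : ZMod m) (x : G) :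
    (σ ^ m) (i, x) = (i, x + ∑ t, c t) := by
  rw [hσ.pow_apply, ZMod.natCast_self, add_zero, ZMod.sum_range_add]

theorem sameCycle_add_zsmul [NeZero m] (hσ : σ.IsSkewShift c) (i : ZMod m) (x : G) (k : ℤ) :
    σ.SameCycle (i, x) (i, x + k • ∑ t, c t) := by
  induction k using Int.induction_on with
  | zero => rw [zero_smul, add_zero]
  | succ k ih =>
    refine ih.trans ?_
    rw [add_smul, one_smul, ← add_assoc, ← hσ.pow_period_apply]
    exact (SameCycle.refl _ _).pow_right
  | pred k ih =>
    refine ih.trans ?_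
    have hback : (σ ^ m) (i, x + (-(k : ℤ) - 1) • ∑ t, c t) = (i, x + -(k : ℤ) • ∑ t, c t) := by
      rw [hσ.pow_period_apply, add_assoc, sub_smul, one_smul, sub_add_cancel]
    rw [← hback]
    exact (SameCycle.refl _ _).pow_right.symm

theorem sameCycle [NeZero m] (hσ : σ.IsSkewShift c)
    (hc : AddSubgroup.zmultiples (∑ t, c t) = ⊤) (p q : ZMod m × G) : σ.SameCycle p q := by
  suffices h : ∀ p, σ.SameCycle (0, 0) p from (h p).symm.trans (h q)
  rintro ⟨i, y⟩
  set s := ∑ j ∈ range i.val, c j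
  have hstart : (σ ^ i.val) (0, 0) = (i, s) := by simp [hσ.pow_apply, s]
  obtain ⟨k, hk⟩ := AddSubgroup.mem_zmultiples_iff.1 (hc ▸ AddSubgroup.mem_top (y - s))
  have hfibre := hσ.sameCycle_add_zsmul i s k
  rw [hk, add_sub_cancel] at hfibre
  have hreach : σ.SameCycle (0, 0) (i, s) := hstart ▸ (SameCycle.refl _ _).pow_right
  exact hreach.trans hfibre

end IsSkewShift

end Equiv.Perm

/-- last part of Theorem 1.1. With `τ` as before, if `m - 2r` is coprime
to `n` and `m * n ≥ 2`, then `τ` is a single cycle through all of `ZMod m × ZMod n`, i.e.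
`C_m^+ ⊗_h {C_n^+, C_n^-} ≅ C_{mn}^+`. -/
theorem tau_isCycle_of_coprime {m n : ℕ} [NeZero m] [NeZero n]
    (ε : ZMod m → ℤ) (hε : ∀ i, ε i = 1 ∨ ε i = -1)
    (r : ℕ) (hr : r = (Finset.univ.filter fun i : ZMod m => ε i = -1).card)
    (τ : Equiv.Perm (ZMod m × ZMod n))
    (hτ : ∀ (i : ZMod m) (x : ZMod n), τ (i, x) = (i + 1, x + (ε i : ZMod n)))
    (hcop : (((m : ℤ) - 2 * (r : ℤ)).natAbs).Coprime n)
    (hmn : 2 ≤ m * n) :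
    τ.IsCycle ∧ τ.support = Finset.univ := by
  have htotal : ∑ i, (ε i : ZMod n) = (((m : ℤ) - 2 * r : ℤ) : ZMod n) := by
    rw [← Int.cast_sum, sum_eq_card_sub_two_mul_card_filter_eq_neg_one ε hε, hr, ZMod.card]
  have hgen : AddSubgroup.zmultiples (∑ i, (ε i : ZMod n)) = ⊤ := by
    rw [htotal]
    exact ZMod.zmultiples_eq_top_of_isUnit (ZMod.isUnit_intCast_of_natAbs_coprime hcop)
  have : Nontrivial (ZMod m × ZMod n) := by
    rw [← Fintype.one_lt_card_iff_nontrivial, Fintype.card_prod, ZMod.card, ZMod.card]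
    omega
  exact Perm.isCycle_and_support_eq_univ_of_forall_sameCycle (Perm.IsSkewShift.sameCycle hτ hgen)
end

section
/- There exists a bijection e : V × Fin n ≃ V × Fin n that is an isomorphism of digraphs from the product digraph D' onto the disjoint union of n copies of the oriented forest; that is, for all u v : V × Fin n, D'.Adj u v ↔ (A (e u).1 (e v).1 ∧ (e u).2 = (e v).2). (This is Theorem 3.1: if F is an acyclic graph and h : E(F⃗) → Σ_n assigns 1-regular digraphs of order n to the arcs of an orientation F⃗ of F, then F⃗ ⊗_h Σ_n ≅ n F⃗.) -/
open SimpleGraph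

noncomputable def fperm {V : Type*} {n : ℕ} (σ : V → V → Equiv.Perm (Fin n))
    (A : V → V → Prop) (a b : V) : Equiv.Perm (Fin n) :=
  open Classical in if A a b then σ a b else (σ b a)⁻¹

noncomputable def wprod {V : Type*} {n : ℕ} (σ : V → V → Equiv.Perm (Fin n))
    (A : V → V → Prop) {G : SimpleGraph V} :
    ∀ {a b : V}, G.Walk a b → Equiv.Perm (Fin n)
  | _, _, SimpleGraph.Walk.nil => 1
  | _, _, SimpleGraph.Walk.cons (u := a) (v := c) _ p => wprod σ A p * fperm σ A a c

section aux

variable {V : Type*} {n : ℕ} (σ : V → V → Equiv.Perm (Fin n)) (A : V → V → Prop)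
  {G : SimpleGraph V}

lemma fperm_A {a b : V} (h : A a b) (hasym : ∀ a b, ¬ (A a b ∧ A b a)) :
    fperm σ A a b = σ a b := by
  simp [fperm, h]

lemma fperm_mul {a b : V} (h : A a b ∨ A b a) (hasym : ∀ a b, ¬ (A a b ∧ A b a)) :
    fperm σ A a b * fperm σ A b a = 1 := by
  classical
  rcases h with h | h
  · have h' : ¬ A b a := fun hb => hasym a b ⟨h, hb⟩
    simp [fperm, h, h']
  · have h' : ¬ A a b := fun hb => hasym a b ⟨hb, h⟩
    simp [fperm, h, h']

lemma wprod_nil {a : V} : wprod σ A (SimpleGraph.Walk.nil : G.Walk a a) = 1 := rfl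

lemma wprod_cons {a c b : V} (h : G.Adj a c) (p : G.Walk c b) :
    wprod σ A (SimpleGraph.Walk.cons h p) = wprod σ A p * fperm σ A a c := rfl

lemma wprod_append {a b c : V} (p : G.Walk a b) (q : G.Walk b c) :
    wprod σ A (p.append q) = wprod σ A q * wprod σ A p := by
  induction p with
  | nil => simp [wprod_nil]
  | cons h p ih =>
      simp only [SimpleGraph.Walk.cons_append, wprod_cons, ih, mul_assoc]

lemma wprod_closed (hG : ∀ a b, G.Adj a b → (A a b ∨ A b a))
    (hasym : ∀ a b, ¬ (A a b ∧ A b a)) (hacyclic : G.IsAcyclic) :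
    ∀ (k : ℕ) (a : V) (w : G.Walk a a), w.length ≤ k → wprod σ A w = 1 := by
  classical
  intro k
  induction k using Nat.strong_induction_on with
  | _ k IH =>
    intro a w hw
    cases w with
    | nil => rfl
    | cons h p =>
      rename_i c
      -- h : G.Adj a c, p : G.Walk c a
      by_cases hp : p.IsPath
      · -- p must equal the single-edge walk from c to a
        have hsingle : (SimpleGraph.Walk.cons h.symm SimpleGraph.Walk.nil :
            G.Walk c a).IsPath := by
          simp [SimpleGraph.Walk.isPath_def, h.ne']
        have := hacyclic.path_unique ⟨p, hp⟩ ⟨_, hsingle⟩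
        have hpe : p = SimpleGraph.Walk.cons h.symm SimpleGraph.Walk.nil :=
          congrArg Subtype.val this
        subst hpe
        rw [wprod_cons, wprod_cons, wprod_nil, one_mul]
        exact fperm_mul σ A (hG c a h.symm) hasym
      · -- p has a repeated vertex; shorten the walk
        rw [SimpleGraph.Walk.isPath_def] at hp
        obtain ⟨x, hdup⟩ := List.exists_duplicate_iff_not_nodup.mpr hp
        have hcount : 2 ≤ p.support.count x := List.duplicate_iff_two_le_count.mp hdup
        have hx : x ∈ p.support := List.count_pos_iff.mp (by omega)
        have hspec : (p.takeUntil x hx).append (p.dropUntil x hx) = p := p.take_spec hx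
        have hcu : (p.takeUntil x hx).support.count x = 1 :=
          p.count_support_takeUntil_eq_one hx
        have hsupp : p.support
            = (p.takeUntil x hx).support ++ (p.dropUntil x hx).support.tail := by
          conv_lhs => rw [← hspec]
          exact SimpleGraph.Walk.support_append _ _
        have hxd : x ∈ (p.dropUntil x hx).support.tail := by
          have hc : p.support.count x = (p.takeUntil x hx).support.count x
              + (p.dropUntil x hx).support.tail.count x := by
            rw [hsupp, List.count_append]
          exact List.count_pos_iff.mp (by omega)
        obtain ⟨y, e, d₂, hd⟩ : ∃ (y : V) (e : G.Adj x y) (d₂ : G.Walk y a),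
            p.dropUntil x hx = SimpleGraph.Walk.cons e d₂ := by
          cases hdd : p.dropUntil x hx with
          | nil =>
            rw [hdd] at hxd; simp at hxd
          | cons e d₂ => exact ⟨_, e, d₂, rfl⟩
        have hxd₂ : x ∈ d₂.support := by
          rw [hd] at hxd; simpa using hxd
        have hspec₂ : (d₂.takeUntil x hxd₂).append (d₂.dropUntil x hxd₂) = d₂ :=
          d₂.take_spec hxd₂
        have hlen : (p.takeUntil x hx).length
            + ((d₂.takeUntil x hxd₂).length + (d₂.dropUntil x hxd₂).length + 1)
            = p.length := by
          have h1 := congrArg SimpleGraph.Walk.length hspec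
          have h2 := congrArg SimpleGraph.Walk.length hspec₂
          rw [SimpleGraph.Walk.length_append] at h1 h2
          rw [hd] at h1
          simp only [SimpleGraph.Walk.length_cons] at h1
          omega
        have hzz : wprod σ A (SimpleGraph.Walk.cons e (d₂.takeUntil x hxd₂)) = 1 := by
          apply IH ((SimpleGraph.Walk.cons e (d₂.takeUntil x hxd₂)).length)
          · simp only [SimpleGraph.Walk.length_cons]
            simp only [SimpleGraph.Walk.length_cons] at hw
            omega
          · exact le_rfl
        have hw' : wprod σ A (SimpleGraph.Walk.cons h
            ((p.takeUntil x hx).append (d₂.dropUntil x hxd₂))) = 1 := by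
          apply IH ((SimpleGraph.Walk.cons h
            ((p.takeUntil x hx).append (d₂.dropUntil x hxd₂))).length)
          · simp only [SimpleGraph.Walk.length_cons, SimpleGraph.Walk.length_append]
            simp only [SimpleGraph.Walk.length_cons] at hw
            omega
          · exact le_rfl
        have hpw : wprod σ A p
            = wprod σ A (d₂.dropUntil x hxd₂) * wprod σ A (p.takeUntil x hx) := by
          conv_lhs => rw [← hspec, hd]
          rw [wprod_append, wprod_cons]
          conv_lhs => rw [← hspec₂, wprod_append]
          rw [mul_assoc (wprod σ A (d₂.dropUntil x hxd₂))]
          rw [← wprod_cons σ A e (d₂.takeUntil x hxd₂), hzz, mul_one]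
        rw [wprod_cons, hpw]
        rw [wprod_cons, wprod_append] at hw'
        rw [mul_assoc] at hw' ⊢
        exact hw'

lemma wprod_cast {a b b' : V} (h : b = b') (w : G.Walk a b) :
    wprod σ A (h ▸ w) = wprod σ A w := by subst h; rfl

lemma wprod_indep (hG : ∀ a b, G.Adj a b → (A a b ∨ A b a))
    (hasym : ∀ a b, ¬ (A a b ∧ A b a)) (hacyclic : G.IsAcyclic)
    {a b : V} (p q : G.Walk a b) : wprod σ A p = wprod σ A q := by
  have hrev : ∀ {x y : V} (r : G.Walk x y), wprod σ A r.reverse = (wprod σ A r)⁻¹ := by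
    intro x y r
    induction r with
    | nil => simp [wprod_nil]
    | cons h r ih =>
        rename_i u v _
        rw [SimpleGraph.Walk.reverse_cons, wprod_append, wprod_cons, ih, wprod_cons,
          wprod_nil, one_mul, mul_inv_rev]
        congr 1
        have := fperm_mul σ A (hG u v h) hasym
        have h2 := fperm_mul σ A (Or.symm (hG u v h)) hasym
        calc fperm σ A v u = fperm σ A v u * (fperm σ A u v * (fperm σ A u v)⁻¹) := by
              simp
          _ = (fperm σ A v u * fperm σ A u v) * (fperm σ A u v)⁻¹ := by rw [mul_assoc]
          _ = (fperm σ A u v)⁻¹ := by rw [h2, one_mul]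
  have hclosed := wprod_closed σ A hG hasym hacyclic (p.append q.reverse).length a
      (p.append q.reverse) le_rfl
  rw [wprod_append, hrev] at hclosed
  have := mul_eq_one_iff_inv_eq.mp hclosed
  -- (wprod q)⁻¹ * wprod p = 1
  have h2 : (wprod σ A q)⁻¹ * wprod σ A p = 1 := hclosed
  calc wprod σ A p = wprod σ A q * ((wprod σ A q)⁻¹ * wprod σ A p) := by
        rw [← mul_assoc, mul_inv_cancel, one_mul]
    _ = wprod σ A q := by rw [h2, mul_one]

end aux

/-- Theorem 3.1. Let `A` be an orientation of an acyclic simple graph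
(a forest) on a finite vertex type `V`, let `σ : V → V → Equiv.Perm (Fin n)` assign a
1-regular digraph (identified with a permutation of `Fin n`) to each pair of vertices,
and let `D'` be the product digraph on `V × Fin n` with
`D'.Adj (a, x) (b, y) ↔ A a b ∧ y = σ a b x`.  Then there is a bijection
`e : V × Fin n ≃ V × Fin n` that is an isomorphism of digraphs from `D'` onto the
disjoint union of `n` copies of the oriented forest, i.e. `F⃗ ⊗_h Σ_n ≅ n F⃗`. -/
theorem product_of_oriented_forest {V : Type*} [Fintype V]
    (A : V → V → Prop)
    (hirr : ∀ a, ¬ A a a)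
    (hasym : ∀ a b, ¬ (A a b ∧ A b a))
    (G : SimpleGraph V) (hG : ∀ a b, G.Adj a b ↔ a ≠ b ∧ (A a b ∨ A b a))
    (hacyclic : G.IsAcyclic)
    (n : ℕ) (σ : V → V → Equiv.Perm (Fin n)) :
    ∃ e : V × Fin n ≃ V × Fin n,
      ∀ u v : V × Fin n,
        (A u.1 v.1 ∧ v.2 = σ u.1 v.1 u.2) ↔ (A (e u).1 (e v).1 ∧ (e u).2 = (e v).2) := by
  classical
  have hGA : ∀ a b, G.Adj a b → (A a b ∨ A b a) := fun a b h => ((hG a b).mp h).2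
  -- roots of connected components
  set root : V → V := fun v => (G.connectedComponentMk v).out with hroot
  have hreach : ∀ v, G.Reachable v (root v) := by
    intro v
    apply ConnectedComponent.exact
    have : G.connectedComponentMk (root v) = G.connectedComponentMk v := by
      exact (G.connectedComponentMk v).out_eq
    rw [this]
  set τ : V → Equiv.Perm (Fin n) := fun v => wprod σ A (hreach v).some with hτ
  have key : ∀ a b, A a b → τ a = τ b * σ a b := by
    intro a b hab
    have hadj : G.Adj a b := (hG a b).mpr ⟨fun h => hirr a (h ▸ hab), Or.inl hab⟩
    have hroots : root a = root b := by
      simp only [hroot]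
      congr 1
      exact ConnectedComponent.sound hadj.reachable
    calc τ a = wprod σ A (hreach a).some := rfl
      _ = wprod σ A (hroots.symm ▸ (SimpleGraph.Walk.cons hadj (hreach b).some)) :=
          wprod_indep σ A hGA hasym hacyclic _ _
      _ = wprod σ A (SimpleGraph.Walk.cons hadj (hreach b).some) :=
          wprod_cast σ A hroots.symm _
      _ = τ b * σ a b := by rw [wprod_cons, fperm_A σ A hab hasym]
  refine ⟨⟨fun p => (p.1, τ p.1 p.2), fun p => (p.1, (τ p.1)⁻¹ p.2), ?_, ?_⟩, ?_⟩
  · intro p; simp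
  · intro p; simp
  · rintro ⟨a, x⟩ ⟨b, y⟩
    simp only [Equiv.coe_fn_mk]
    constructor
    · rintro ⟨hab, hy⟩
      refine ⟨hab, ?_⟩
      rw [key a b hab, hy]; rfl
    · rintro ⟨hab, hxy⟩
      refine ⟨hab, ?_⟩
      rw [key a b hab] at hxy
      have : τ b (σ a b x) = τ b y := hxy
      have := (τ b).injective this
      omega
end

section
/- Define the odd labeling o(f) by o(f)(x) = 2 * f(x) - 1 for each vertex x and o(f)(e) = 2 * val - 2 * p - 2 - o(f)(x) - o(f)(y) for each edge e = xy. Then o(f) is an edge-magic labeling of G with magic sum 2 * val - 2 * p - 2: the combined map sending each vertex x to o(f)(x) and each edge e to o(f)(e) is a bijection from the vertices and edges of G onto {1, 2, …, 2p}, and o(f)(x) + o(f)(xy) + o(f)(y) = 2 * val - 2 * p - 2 for every edge xy. (This is the odd-labeling part of Lemma 4.1.) -/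
/-- The odd labeling obtained from `f`: each edge `xy` receives the label
`2 val - 2 p - 2 - o(f)(x) - o(f)(y)`, where `o(f)(x) = 2 f x - 1`. -/
def oddEdgeLabel {V : Type*} (p val : ℕ) (f : V → ℕ) : Sym2 V → ℕ :=
  Sym2.lift ⟨fun x y => 2 * val - 2 * p - 2 - (2 * f x - 1) - (2 * f y - 1),
    fun x y => by dsimp only; omega⟩

/-- odd-labeling part of Lemma 4.1. Let `G` be a `(p, p)`-graph with a
super edge-magic labeling `(f, g)` with magic sum `val`.  Define the odd labeling `o(f)`
by `o(f)(x) = 2 f x - 1` on vertices and `o(f)(xy) = 2 val - 2 p - 2 - o(f)(x) - o(f)(y)`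
on edges.  Then `o(f)` is an edge-magic labeling of `G` with magic sum `2 val - 2 p - 2`:
the combined map is a bijection onto `{1, …, 2p}` and every edge has label sum
`2 val - 2 p - 2`. -/
theorem odd_labeling_edge_magic {V : Type*} [Fintype V] (p val : ℕ)
    (G : SimpleGraph V)
    (hp : Fintype.card V = p) (hq : Nat.card G.edgeSet = p)
    (f : V → ℕ) (hfinj : Function.Injective f) (hfrange : Set.range f = Set.Icc 1 p)
    (g : Sym2 V → ℕ) (hginj : Set.InjOn g G.edgeSet)
    (hgrange : g '' G.edgeSet = Set.Icc (p + 1) (2 * p))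
    (hval : ∀ x y, G.Adj x y → f x + g s(x, y) + f y = val) :
    (Function.Injective (Sum.elim (fun x : V => 2 * f x - 1)
        (fun e : G.edgeSet => oddEdgeLabel p val f e)) ∧
      Set.range (Sum.elim (fun x : V => 2 * f x - 1)
        (fun e : G.edgeSet => oddEdgeLabel p val f e)) = Set.Icc 1 (2 * p)) ∧
    (∀ x y, G.Adj x y →
      (2 * f x - 1) + oddEdgeLabel p val f s(x, y) + (2 * f y - 1) =
        2 * val - 2 * p - 2) := by
  have hf : ∀ x, 1 ≤ f x ∧ f x ≤ p := by
    intro x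
    have : f x ∈ Set.Icc 1 p := hfrange ▸ Set.mem_range_self x
    exact this
  have hg : ∀ e ∈ G.edgeSet, p + 1 ≤ g e ∧ g e ≤ 2 * p := by
    intro e he
    have : g e ∈ Set.Icc (p + 1) (2 * p) := hgrange ▸ Set.mem_image_of_mem g he
    exact this
  have key : ∀ x y, G.Adj x y → oddEdgeLabel p val f s(x, y) = 2 * g s(x, y) - 2 * p := by
    intro x y hxy
    have h1 := hf x; have h2 := hf y
    have h3 := hg s(x, y) ((SimpleGraph.mem_edgeSet G).mpr hxy)
    have h4 := hval x y hxy
    simp only [oddEdgeLabel, Sym2.lift_mk]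
    omega
  have keyE : ∀ e ∈ G.edgeSet, oddEdgeLabel p val f e = 2 * g e - 2 * p := by
    intro e
    induction e using Sym2.ind with
    | _ x y => intro he; exact key x y ((SimpleGraph.mem_edgeSet G).mp he)
  refine ⟨⟨?_, ?_⟩, ?_⟩
  · rintro (x | ⟨e, he⟩) (y | ⟨e', he'⟩) hab
    · simp only [Sum.elim_inl] at hab
      have := hf x; have := hf y
      exact congrArg Sum.inl (hfinj (by omega))
    · exfalso
      simp only [Sum.elim_inl, Sum.elim_inr] at hab
      rw [keyE e' he'] at hab
      have := hf x; have := hg e' he'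
      omega
    · exfalso
      simp only [Sum.elim_inl, Sum.elim_inr] at hab
      rw [keyE e he] at hab
      have := hf y; have := hg e he
      omega
    · simp only [Sum.elim_inr] at hab
      rw [keyE e he, keyE e' he'] at hab
      have := hg e he; have := hg e' he'
      have : e = e' := hginj he he' (by omega)
      exact congrArg Sum.inr (Subtype.ext this)
  · ext n
    constructor
    · rintro ⟨(x | ⟨e, he⟩), rfl⟩
      · have := hf x
        simp only [Sum.elim_inl, Set.mem_Icc]
        omega
      · have := hg e he
        simp only [Sum.elim_inr, Set.mem_Icc]
        rw [keyE e he]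
        omega
    · intro hn
      rw [Set.mem_Icc] at hn
      by_cases hpar : n % 2 = 1
      · have hmem : (n + 1) / 2 ∈ Set.range f := by
          rw [hfrange, Set.mem_Icc]; omega
        obtain ⟨x, hx⟩ := hmem
        exact ⟨Sum.inl x, by simp only [Sum.elim_inl]; omega⟩
      · have hmem : n / 2 + p ∈ g '' G.edgeSet := by
          rw [hgrange, Set.mem_Icc]; omega
        obtain ⟨e, he, hge⟩ := hmem
        refine ⟨Sum.inr ⟨e, he⟩, ?_⟩
        simp only [Sum.elim_inr]
        rw [keyE e he, hge]
        omega
  · intro x y hxy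
    rw [key x y hxy]
    have := hf x; have := hf y
    have := hg s(x, y) ((SimpleGraph.mem_edgeSet G).mpr hxy)
    have := hval x y hxy
    omega
end

section
/- Define the even labeling e(f) by e(f)(x) = 2 * f(x) for each vertex x and e(f)(e) = 2 * val - 2 * p - 1 - e(f)(x) - e(f)(y) for each edge e = xy. Then e(f) is an edge-magic labeling of G with magic sum 2 * val - 2 * p - 1: the combined map sending each vertex x to e(f)(x) and each edge e to e(f)(e) is a bijection from the vertices and edges of G onto {1, 2, …, 2p}, and e(f)(x) + e(f)(xy) + e(f)(y) = 2 * val - 2 * p - 1 for every edge xy. (This is the even-labeling part of Lemma 4.1.) -/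
/-- The even labeling obtained from `f`: each edge `xy` receives the label
`2 val - 2 p - 1 - e(f)(x) - e(f)(y)`, where `e(f)(x) = 2 f x`. -/
def evenEdgeLabel {V : Type*} (p val : ℕ) (f : V → ℕ) : Sym2 V → ℕ :=
  Sym2.lift ⟨fun x y => 2 * val - 2 * p - 1 - 2 * f x - 2 * f y,
    fun x y => by dsimp only; omega⟩

/-- even-labeling part of Lemma 4.1. Let `G` be a `(p, p)`-graph with a
super edge-magic labeling `(f, g)` with magic sum `val`.  Define the even labeling `e(f)`
by `e(f)(x) = 2 f x` on vertices and `e(f)(xy) = 2 val - 2 p - 1 - e(f)(x) - e(f)(y)` on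
edges.  Then `e(f)` is an edge-magic labeling of `G` with magic sum `2 val - 2 p - 1`:
the combined map is a bijection onto `{1, …, 2p}` and every edge has label sum
`2 val - 2 p - 1`. -/
theorem even_labeling_edge_magic {V : Type*} [Fintype V] (p val : ℕ)
    (G : SimpleGraph V)
    (hp : Fintype.card V = p) (hq : Nat.card G.edgeSet = p)
    (f : V → ℕ) (hfinj : Function.Injective f) (hfrange : Set.range f = Set.Icc 1 p)
    (g : Sym2 V → ℕ) (hginj : Set.InjOn g G.edgeSet)
    (hgrange : g '' G.edgeSet = Set.Icc (p + 1) (2 * p))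
    (hval : ∀ x y, G.Adj x y → f x + g s(x, y) + f y = val) :
    (Function.Injective (Sum.elim (fun x : V => 2 * f x)
        (fun e : G.edgeSet => evenEdgeLabel p val f e)) ∧
      Set.range (Sum.elim (fun x : V => 2 * f x)
        (fun e : G.edgeSet => evenEdgeLabel p val f e)) = Set.Icc 1 (2 * p)) ∧
    (∀ x y, G.Adj x y →
      2 * f x + evenEdgeLabel p val f s(x, y) + 2 * f y = 2 * val - 2 * p - 1) := by
  have hf : ∀ x : V, 1 ≤ f x ∧ f x ≤ p := by
    intro x
    have : f x ∈ Set.range f := ⟨x, rfl⟩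
    rw [hfrange] at this
    exact this
  have hg : ∀ e ∈ G.edgeSet, p + 1 ≤ g e ∧ g e ≤ 2 * p := by
    intro e he
    have : g e ∈ g '' G.edgeSet := ⟨e, he, rfl⟩
    rw [hgrange] at this
    exact this
  -- key: value of evenEdgeLabel on an edge
  have key : ∀ e ∈ G.edgeSet, evenEdgeLabel p val f e = 2 * g e - 2 * p - 1 := by
    intro e
    induction e using Sym2.ind with
    | _ x y =>
      intro he
      rw [SimpleGraph.mem_edgeSet] at he
      have h1 := hval x y he
      have h2 := hg s(x, y) (by rwa [SimpleGraph.mem_edgeSet])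
      have h3 := hf x
      have h4 := hf y
      show 2 * val - 2 * p - 1 - 2 * f x - 2 * f y = _
      omega
  constructor
  · constructor
    · rintro (a | a) (b | b) hab
      · simp only [Sum.elim_inl] at hab
        exact congrArg Sum.inl (hfinj (by omega))
      · exfalso
        simp only [Sum.elim_inl, Sum.elim_inr] at hab
        rw [key b b.2] at hab
        have := hg b b.2
        omega
      · exfalso
        simp only [Sum.elim_inl, Sum.elim_inr] at hab
        rw [key a a.2] at hab
        have := hg a a.2
        omega
      · simp only [Sum.elim_inr] at hab
        rw [key a a.2, key b b.2] at hab
        have h1 := hg a a.2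
        have h2 := hg b b.2
        exact congrArg Sum.inr (Subtype.ext (hginj a.2 b.2 (by omega)))
    · ext n
      simp only [Set.mem_range, Set.mem_Icc]
      constructor
      · rintro ⟨(a | a), rfl⟩
        · have := hf a
          simp only [Sum.elim_inl]
          omega
        · simp only [Sum.elim_inr]
          rw [key a a.2]
          have := hg a a.2
          omega
      · rintro ⟨h1, h2⟩
        rcases Nat.even_or_odd n with ⟨m, hm⟩ | ⟨m, hm⟩
        · have hm1 : m ∈ Set.Icc 1 p := by constructor <;> omega
          rw [← hfrange] at hm1
          obtain ⟨x, hx⟩ := hm1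
          exact ⟨Sum.inl x, by simp [hx]; omega⟩
        · have hm1 : m + p + 1 ∈ Set.Icc (p + 1) (2 * p) := by constructor <;> omega
          rw [← hgrange] at hm1
          obtain ⟨e, he, hge⟩ := hm1
          refine ⟨Sum.inr ⟨e, he⟩, ?_⟩
          simp only [Sum.elim_inr]
          rw [key e he, hge]
          omega
  · intro x y hxy
    have h1 := hval x y hxy
    have h2 := hg s(x, y) (by rwa [SimpleGraph.mem_edgeSet])
    have h3 := hf x
    have h4 := hf y
    show 2 * f x + (2 * val - 2 * p - 1 - 2 * f x - 2 * f y) + 2 * f y = _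
    omega
end
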